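/- (Theorem 4.10, one step with the sharper factor δ_{k,1}) Let A ∈ ℝ^{m×p} have all rows nonzero, B ∈ ℝ^{q×n}, C ∈ ℝ^{m×n}, let X⋆ satisfy A X⋆ B = C, and let 0 < α < 2/‖B‖². Let σ_A, σ_B > 0 be such that ‖A v‖ ≥ σ_A ‖v‖ for all v in the column space of Aᵀ and ‖Bᵀ w‖ ≥ σ_B ‖w‖ for all w in the column space of B. Let X ∈ ℝ^{p×q} have every column of X − X⋆ in the column space of Aᵀ and every column of (X − X⋆)ᵀ in the column space of B, and set R = C − A X B with R ≠ 0. Define Ω := { i : ‖R_{i,:}‖²/‖A_{i,:}‖² < (1/m) Σ_{j=1}^m ‖R_{j,:}‖²/‖A_{j,:}‖² }, and let ε ∈ (0,1] be defined by (1/m) Σ_j ‖R_{j,:}‖²/‖A_{j,:}‖² = ε · max_j ‖R_{j,:}‖²/‖A_{j,:}‖². Let i⋆ maximize ‖R_{i,:}‖²/‖A_{i,:}‖², and set X⁺ = X + (α/‖A_{i⋆,:}‖²) A_{i⋆,:}ᵀ R_{i⋆,:} Bᵀ. Then ‖X⁺ − X⋆‖_F² ≤ (1 − (2α − α²‖B‖²)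 · φ · σ_A² σ_B²) ‖X − X⋆‖_F², where φ = 1 / ( Σ_{i∉Ω} ‖A_{i,:}‖² + ε Σ_{i∈Ω} ‖A_{i,:}‖² ). -/

import Mathlib

/-!
With `E = X - X⋆` we have `A E B = -R`, so the cross term of the rank-one update with `E` is
`-(α/a)‖r‖²` (`a = ‖A_{i⋆}‖²`, `r = R_{i⋆}`), and `‖E‖_F²` drops by at least
`(2α - α²‖B‖²) M`, where `M = ‖r‖²/a` is the largest ratio. The subspace hypotheses give
`σ_A² σ_B² ‖E‖_F² ≤ ‖A E B‖_F² = ‖R‖_F²`, and bounding `‖R_i‖²` by `εM‖A_i‖²` on `Ω` and by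
`M‖A_i‖²` elsewhere gives `φ ‖R‖_F² ≤ M`.
-/

open Matrix Finset Filter Topology

/-- Squared Euclidean norm of a vector. -/
noncomputable def vnormSq {k : ℕ} (v : Fin k → ℝ) : ℝ := ∑ j, (v j) ^ 2

/-- Squared Frobenius norm of a matrix. -/
noncomputable def frobSq {a b : ℕ} (X : Matrix (Fin a) (Fin b) ℝ) : ℝ := ∑ i, ∑ j, (X i j) ^ 2

/-- Frobenius norm of a matrix. -/
noncomputable def frobNorm {a b : ℕ} (X : Matrix (Fin a) (Fin b) ℝ) : ℝ := Real.sqrt (frobSq X)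

/-- Frobenius (trace) inner product `⟨X, Y⟩_F = tr(Xᵀ Y)`. -/
noncomputable def frobInner {a b : ℕ} (X Y : Matrix (Fin a) (Fin b) ℝ) : ℝ := Matrix.trace (Xᵀ * Y)

/-- Spectral (operator 2-) norm of a matrix. -/
noncomputable def specNorm {a b : ℕ} (B : Matrix (Fin a) (Fin b) ℝ) : ℝ :=
  ‖LinearMap.toContinuousLinearMap (Matrix.toEuclideanLin B)‖

/-- `Mp` is the Moore–Penrose pseudoinverse of `M`: the four Penrose conditions. -/
def IsMPInv {a b : ℕ} (M : Matrix (Fin a) (Fin b) ℝ) (Mp : Matrix (Fin b) (Fin a) ℝ) : Prop :=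
  M * Mp * M = M ∧ Mp * M * Mp = Mp ∧ (M * Mp)ᵀ = M * Mp ∧ (Mp * M)ᵀ = Mp * M

lemma vnormSq_nonneg {k : ℕ} (v : Fin k → ℝ) : 0 ≤ vnormSq v :=
  Finset.sum_nonneg fun _ _ => sq_nonneg _

lemma vnormSq_pos {k : ℕ} {v : Fin k → ℝ} (h : v ≠ 0) : 0 < vnormSq v := by
  obtain ⟨i, hi⟩ := Function.ne_iff.mp h
  exact Finset.sum_pos' (fun _ _ => sq_nonneg _) ⟨i, Finset.mem_univ i, pow_two_pos_of_ne_zero hi⟩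

lemma vnormSq_eq_dotProduct_self {k : ℕ} (v : Fin k → ℝ) : vnormSq v = v ⬝ᵥ v := by
  simp only [vnormSq, dotProduct, sq]

lemma vnormSq_eq_norm_sq {k : ℕ} (v : EuclideanSpace ℝ (Fin k)) : vnormSq v = ‖v‖ ^ 2 := by
  rw [EuclideanSpace.norm_eq, Real.sq_sqrt (Finset.sum_nonneg fun _ _ => sq_nonneg _)]
  simp only [vnormSq, Real.norm_eq_abs, sq_abs]

lemma vnormSq_mulVec_le {q n : ℕ} (B : Matrix (Fin q) (Fin n) ℝ) (r : Fin n → ℝ) :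
    vnormSq (B *ᵥ r) ≤ specNorm B ^ 2 * vnormSq r := by
  have h := (LinearMap.toContinuousLinearMap (Matrix.toEuclideanLin B)).le_opNorm
    (WithLp.toLp 2 r)
  rw [vnormSq_eq_norm_sq (WithLp.toLp 2 r), ← mul_pow]
  exact (vnormSq_eq_norm_sq _).trans_le (pow_le_pow_left₀ (norm_nonneg _) h 2)

lemma frobSq_eq_sum_vnormSq {a b : ℕ} (X : Matrix (Fin a) (Fin b) ℝ) :
    frobSq X = ∑ i, vnormSq (X i) :=
  rfl

lemma frobSq_transpose {a b : ℕ} (X : Matrix (Fin a) (Fin b) ℝ) : frobSq Xᵀ = frobSq X :=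
  Finset.sum_comm

lemma frobSq_neg {a b : ℕ} (X : Matrix (Fin a) (Fin b) ℝ) : frobSq (-X) = frobSq X := by
  simp only [frobSq, Matrix.neg_apply, neg_sq]

lemma frobSq_add_smul_vecMulVec {p q : ℕ} (E : Matrix (Fin p) (Fin q) ℝ) (s : ℝ)
    (u : Fin p → ℝ) (v : Fin q → ℝ) :
    frobSq (E + s • vecMulVec u v)
      = frobSq E + 2 * s * (u ⬝ᵥ E *ᵥ v) + s ^ 2 * (vnormSq u * vnormSq v) := by
  rw [dot_mulVec_eq_sum_sum, Finset.sum_comm, vnormSq, vnormSq, Finset.sum_mul_sum]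
  simp only [frobSq, Matrix.add_apply, Matrix.smul_apply, vecMulVec_apply, smul_eq_mul,
    Finset.mul_sum, ← Finset.sum_add_distrib]
  exact Finset.sum_congr rfl fun i _ => Finset.sum_congr rfl fun j _ => by ring

lemma exists_mul_apply_eq_mulVec {R l m n o : Type*} [CommSemiring R] [Fintype m] [Fintype o]
    (A : Matrix l m R) {E : Matrix m n R} {B : Matrix n o R} (hE : ∀ k, ∃ w, E k = B *ᵥ w)
    (i : l) : ∃ w, (A * E) i = B *ᵥ w := by
  choose W hW using hE
  have hEW : E = Matrix.of W * Bᵀ := by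
    funext k
    rw [mul_apply_eq_vecMul, vecMul_transpose, hW]
    rfl
  exact ⟨(A * Matrix.of W) i, by
    rw [hEW, ← Matrix.mul_assoc, mul_apply_eq_vecMul, vecMul_transpose]⟩

lemma sq_mul_frobSq_le_frobSq_mul {p q n : ℕ} (F : Matrix (Fin p) (Fin q) ℝ)
    (B : Matrix (Fin q) (Fin n) ℝ) {σ : ℝ} (hσ : 0 ≤ σ)
    (hB : ∀ w : Fin q → ℝ, (∃ u : Fin n → ℝ, w = B *ᵥ u) →
      σ * Real.sqrt (vnormSq w) ≤ Real.sqrt (vnormSq (Bᵀ *ᵥ w)))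
    (hF : ∀ i, ∃ u : Fin n → ℝ, F i = B *ᵥ u) :
    σ ^ 2 * frobSq F ≤ frobSq (F * B) := by
  rw [frobSq_eq_sum_vnormSq, frobSq_eq_sum_vnormSq, Finset.mul_sum]
  refine Finset.sum_le_sum fun i _ => ?_
  have h := hB _ (hF i)
  rwa [Real.le_sqrt (by positivity) (vnormSq_nonneg _), mul_pow, Real.sq_sqrt (vnormSq_nonneg _),
    mulVec_transpose, ← mul_apply_eq_vecMul] at h

lemma sq_mul_sq_mul_frobSq_le_frobSq_mul_mul {m p q n : ℕ} (A : Matrix (Fin m) (Fin p) ℝ)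
    (E : Matrix (Fin p) (Fin q) ℝ) (B : Matrix (Fin q) (Fin n) ℝ) {σA σB : ℝ}
    (hσA : 0 ≤ σA) (hσB : 0 ≤ σB)
    (hA : ∀ v : Fin p → ℝ, (∃ u : Fin m → ℝ, v = Aᵀ *ᵥ u) →
      σA * Real.sqrt (vnormSq v) ≤ Real.sqrt (vnormSq (A *ᵥ v)))
    (hB : ∀ w : Fin q → ℝ, (∃ u : Fin n → ℝ, w = B *ᵥ u) →
      σB * Real.sqrt (vnormSq w) ≤ Real.sqrt (vnormSq (Bᵀ *ᵥ w)))
    (hcol : ∀ j, ∃ u : Fin m → ℝ, (fun i => E i j) = Aᵀ *ᵥ u)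
    (hrow : ∀ i, ∃ w : Fin n → ℝ, E i = B *ᵥ w) :
    σA ^ 2 * σB ^ 2 * frobSq E ≤ frobSq (A * E * B) := by
  have hAE : σA ^ 2 * frobSq E ≤ frobSq (A * E) := by
    simpa only [frobSq_transpose, ← transpose_mul] using
      sq_mul_frobSq_le_frobSq_mul Eᵀ Aᵀ hσA hA hcol
  have hAEB := sq_mul_frobSq_le_frobSq_mul (A * E) B hσB hB (exists_mul_apply_eq_mulVec A hrow)
  calc σA ^ 2 * σB ^ 2 * frobSq E = σB ^ 2 * (σA ^ 2 * frobSq E) := by ring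
    _ ≤ σB ^ 2 * frobSq (A * E) := by gcongr
    _ ≤ frobSq (A * E * B) := hAEB

lemma frobSq_add_smul_vecMulVec_le {m p q n : ℕ} (A : Matrix (Fin m) (Fin p) ℝ)
    (E : Matrix (Fin p) (Fin q) ℝ) (B : Matrix (Fin q) (Fin n) ℝ) {i : Fin m} (hAi : A i ≠ 0)
    {r : Fin n → ℝ} (hr : (A * E * B) i = -r) (α : ℝ) :
    frobSq (E + (α / vnormSq (A i)) • vecMulVec (A i) (B *ᵥ r))
      ≤ frobSq E - (2 * α - α ^ 2 * specNorm B ^ 2) * (vnormSq r / vnormSq (A i)) := by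
  have ha := vnormSq_pos hAi
  have hcross : A i ⬝ᵥ E *ᵥ (B *ᵥ r) = -vnormSq r := by
    rw [mulVec_mulVec, dotProduct_mulVec, ← mul_apply_eq_vecMul, ← Matrix.mul_assoc, hr,
      neg_dotProduct, vnormSq_eq_dotProduct_self]
  have hBr : (α / vnormSq (A i)) ^ 2 * (vnormSq (A i) * vnormSq (B *ᵥ r))
      ≤ (α / vnormSq (A i)) ^ 2 * (vnormSq (A i) * (specNorm B ^ 2 * vnormSq r)) := by
    gcongr
    exact vnormSq_mulVec_le B r
  rw [frobSq_add_smul_vecMulVec, hcross]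
  have : frobSq E + 2 * (α / vnormSq (A i)) * -vnormSq r
      + (α / vnormSq (A i)) ^ 2 * (vnormSq (A i) * (specNorm B ^ 2 * vnormSq r))
      = frobSq E - (2 * α - α ^ 2 * specNorm B ^ 2) * (vnormSq r / vnormSq (A i)) := by
    field_simp
    ring
  linarith

section WeightedRatios

variable {ι : Type*} [Fintype ι] [DecidableEq ι] {x w : ι → ℝ} {i₀ : ι} {ε : ℝ} {Ω : Finset ι}

lemma sum_compl_add_mul_sum_pos (hx : ∀ i, 0 ≤ x i) (hw : ∀ i, 0 < w i) (hε0 : 0 ≤ ε)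
    (hε1 : ε ≤ 1) (hΩ : ∀ i ∈ Ω, x i / w i < ε * (x i₀ / w i₀)) :
    0 < ∑ i ∈ Ωᶜ, w i + ε * ∑ i ∈ Ω, w i := by
  have hi₀ : i₀ ∉ Ω := fun h =>
    (hΩ i₀ h).not_ge (mul_le_of_le_one_left (div_nonneg (hx i₀) (hw i₀).le) hε1)
  have hle : w i₀ ≤ ∑ i ∈ Ωᶜ, w i :=
    Finset.single_le_sum (fun i _ => (hw i).le) (Finset.mem_compl.mpr hi₀)
  have hΩ0 : 0 ≤ ε * ∑ i ∈ Ω, w i := mul_nonneg hε0 (Finset.sum_nonneg fun i _ => (hw i).le)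
  linarith [hw i₀]

lemma sum_le_mul_sum_compl_add_mul_sum (hw : ∀ i, 0 < w i) {M : ℝ} (hmax : ∀ i, x i / w i ≤ M)
    (hΩ : ∀ i ∈ Ω, x i / w i < ε * M) :
    ∑ i, x i ≤ M * (∑ i ∈ Ωᶜ, w i + ε * ∑ i ∈ Ω, w i) := by
  have hle : ∀ i c, x i / w i ≤ c → x i ≤ c * w i := fun i c h => (div_le_iff₀ (hw i)).mp h
  calc ∑ i, x i = ∑ i ∈ Ω, x i + ∑ i ∈ Ωᶜ, x i := (Finset.sum_add_sum_compl Ω x).symm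
    _ ≤ ∑ i ∈ Ω, ε * M * w i + ∑ i ∈ Ωᶜ, M * w i := by
        gcongr with i hi i
        · exact hle i _ (hΩ i hi).le
        · exact hle i _ (hmax i)
    _ = M * (∑ i ∈ Ωᶜ, w i + ε * ∑ i ∈ Ω, w i) := by
        rw [← Finset.mul_sum, ← Finset.mul_sum]
        ring

end WeightedRatios

theorem stmt15_general {m p q n : ℕ}
    (A : Matrix (Fin m) (Fin p) ℝ) (hrows : ∀ i : Fin m, A i ≠ 0)
    (B : Matrix (Fin q) (Fin n) ℝ) (C : Matrix (Fin m) (Fin n) ℝ)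
    (Xstar : Matrix (Fin p) (Fin q) ℝ) (hsol : A * Xstar * B = C)
    (α : ℝ) (hα1 : 0 < α) (hα2 : α < 2 / specNorm B ^ 2)
    (σA σB : ℝ) (hσA : 0 < σA) (hσB : 0 < σB)
    (hA : ∀ v : Fin p → ℝ, (∃ u : Fin m → ℝ, v = Aᵀ *ᵥ u) →
      σA * Real.sqrt (vnormSq v) ≤ Real.sqrt (vnormSq (A *ᵥ v)))
    (hB : ∀ w : Fin q → ℝ, (∃ u : Fin n → ℝ, w = B *ᵥ u) →
      σB * Real.sqrt (vnormSq w) ≤ Real.sqrt (vnormSq (Bᵀ *ᵥ w)))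
    (X : Matrix (Fin p) (Fin q) ℝ)
    (hcol : ∀ j : Fin q, ∃ u : Fin m → ℝ, (fun i => (X - Xstar) i j) = Aᵀ *ᵥ u)
    (hrow : ∀ i : Fin p, ∃ w : Fin n → ℝ, (X - Xstar) i = B *ᵥ w)
    (R : Matrix (Fin m) (Fin n) ℝ) (hRdef : R = C - A * X * B)
    (Ω : Finset (Fin m))
    (hΩ : Ω = Finset.univ.filter fun i =>
      vnormSq (R i) / vnormSq (A i)
        < (1 / (m : ℝ)) * ∑ j : Fin m, vnormSq (R j) / vnormSq (A j))
    (istar : Fin m)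
    (hmax : ∀ i : Fin m,
      vnormSq (R i) / vnormSq (A i) ≤ vnormSq (R istar) / vnormSq (A istar))
    (ε : ℝ) (hε0 : 0 < ε) (hε1 : ε ≤ 1)
    (hεdef : (1 / (m : ℝ)) * ∑ j : Fin m, vnormSq (R j) / vnormSq (A j)
      = ε * (vnormSq (R istar) / vnormSq (A istar)))
    (φ : ℝ)
    (hφ : φ = 1 / (∑ i ∈ Ωᶜ, vnormSq (A i) + ε * ∑ i ∈ Ω, vnormSq (A i))) :
    frobSq (X + (α / vnormSq (A istar)) • vecMulVec (A istar) (B *ᵥ (R istar)) - Xstar)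
      ≤ (1 - (2 * α - α ^ 2 * specNorm B ^ 2) * φ * (σA ^ 2 * σB ^ 2))
          * frobSq (X - Xstar) := by
  set E := X - Xstar
  set M := vnormSq (R istar) / vnormSq (A istar)
  have hAEB : A * E * B = -R := by
    rw [Matrix.mul_sub, Matrix.sub_mul, hsol, hRdef]
    abel
  have hstep := frobSq_add_smul_vecMulVec_le A E B (hrows istar) (congrFun hAEB istar) α
  have hlower : σA ^ 2 * σB ^ 2 * frobSq E ≤ frobSq R := by
    simpa only [hAEB, frobSq_neg] using
      sq_mul_sq_mul_frobSq_le_frobSq_mul_mul A E B hσA.le hσB.le hA hB hcol hrow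
  have hwpos i : 0 < vnormSq (A i) := vnormSq_pos (hrows i)
  have hΩlt : ∀ i ∈ Ω, vnormSq (R i) / vnormSq (A i) < ε * M := fun i hi => by
    simpa only [hΩ, hεdef, Finset.mem_filter, Finset.mem_univ, true_and] using hi
  have hD := sum_compl_add_mul_sum_pos (fun i => vnormSq_nonneg (R i)) hwpos hε0.le hε1 hΩlt
  have hφR : φ * frobSq R ≤ M := by
    rw [hφ, one_div_mul_eq_div, div_le_iff₀ hD]
    exact sum_le_mul_sum_compl_add_mul_sum hwpos hmax hΩlt
  have hφ0 : 0 ≤ φ := by rw [hφ]; positivity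
  have hc : 0 ≤ 2 * α - α ^ 2 * specNorm B ^ 2 := by
    rcases (sq_nonneg (specNorm B)).eq_or_lt with hb | hb
    · rw [← hb]; linarith
    · nlinarith [(lt_div_iff₀ hb).mp hα2]
  rw [add_sub_right_comm]
  calc _ ≤ frobSq E - (2 * α - α ^ 2 * specNorm B ^ 2) * M := hstep
    _ ≤ frobSq E - (2 * α - α ^ 2 * specNorm B ^ 2) * (φ * (σA ^ 2 * σB ^ 2 * frobSq E)) := by
        gcongr
        exact (mul_le_mul_of_nonneg_left hlower hφ0).trans hφR
    _ = (1 - (2 * α - α ^ 2 * specNorm B ^ 2) * φ * (σA ^ 2 * σB ^ 2)) * frobSq E := by ring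

/-- Theorem 4.10, one MWRBK step with the sharper factor `δ_{k,1} = 1 − (2α−α²‖B‖²) φ σ_A² σ_B²`. -/
theorem stmt15 {m p q n : ℕ}
    (A : Matrix (Fin m) (Fin p) ℝ) (hrows : ∀ i : Fin m, A i ≠ 0)
    (B : Matrix (Fin q) (Fin n) ℝ) (C : Matrix (Fin m) (Fin n) ℝ)
    (Xstar : Matrix (Fin p) (Fin q) ℝ) (hsol : A * Xstar * B = C)
    (α : ℝ) (hα1 : 0 < α) (hα2 : α < 2 / specNorm B ^ 2)
    (σA σB : ℝ) (hσA : 0 < σA) (hσB : 0 < σB)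
    (hA : ∀ v : Fin p → ℝ, (∃ u : Fin m → ℝ, v = Aᵀ *ᵥ u) →
      σA * Real.sqrt (vnormSq v) ≤ Real.sqrt (vnormSq (A *ᵥ v)))
    (hB : ∀ w : Fin q → ℝ, (∃ u : Fin n → ℝ, w = B *ᵥ u) →
      σB * Real.sqrt (vnormSq w) ≤ Real.sqrt (vnormSq (Bᵀ *ᵥ w)))
    (X : Matrix (Fin p) (Fin q) ℝ)
    (hcol : ∀ j : Fin q, ∃ u : Fin m → ℝ, (fun i => (X - Xstar) i j) = Aᵀ *ᵥ u)
    (hrow : ∀ i : Fin p, ∃ w : Fin n → ℝ, (X - Xstar) i = B *ᵥ w)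
    (R : Matrix (Fin m) (Fin n) ℝ) (hRdef : R = C - A * X * B) (hR0 : R ≠ 0)
    (Ω : Finset (Fin m))
    (hΩ : Ω = Finset.univ.filter fun i =>
      vnormSq (R i) / vnormSq (A i)
        < (1 / (m : ℝ)) * ∑ j : Fin m, vnormSq (R j) / vnormSq (A j))
    (istar : Fin m)
    (hmax : ∀ i : Fin m,
      vnormSq (R i) / vnormSq (A i) ≤ vnormSq (R istar) / vnormSq (A istar))
    (ε : ℝ) (hε0 : 0 < ε) (hε1 : ε ≤ 1)
    (hεdef : (1 / (m : ℝ)) * ∑ j : Fin m, vnormSq (R j) / vnormSq (A j)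
      = ε * (vnormSq (R istar) / vnormSq (A istar)))
    (φ : ℝ)
    (hφ : φ = 1 / (∑ i ∈ Ωᶜ, vnormSq (A i) + ε * ∑ i ∈ Ω, vnormSq (A i))) :
    frobSq (X + (α / vnormSq (A istar)) • vecMulVec (A istar) (B *ᵥ (R istar)) - Xstar)
      ≤ (1 - (2 * α - α ^ 2 * specNorm B ^ 2) * φ * (σA ^ 2 * σB ^ 2))
          * frobSq (X - Xstar) :=
  stmt15_general A hrows B C Xstar hsol α hα1 hα2 σA σB hσA hσB hA hB X hcol hrow R hRdef Ω hΩ istar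
    hmax ε hε0 hε1 hεdef φ hφ
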